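/- arXiv:math/9902158 — 3 statements merged into one kernel-verified Lean document; each statement's English description precedes it below -/
import Mathlib

section
/- Let f be a holomorphic germ fixing 0 with f'(0) = ρ ≠ 0, and let j ∈ ℤ. Then the pullback satisfies f^*(dζ²/ζ^{j+2}) = ρ^{−j} dζ²/ζ^{j+2} + O(dζ²/ζ^{j+1}). Consequently, if ρ^j ≠ 1 for all 1 ≤ j, then the only polar parts of order ≤ −2 invariant under f^* are multiples of dζ²/ζ². -/
/-!
Write `f ζ = ζ g(ζ)` with `g` analytic and `g 0 = ρ`. Then `f ^ m f'² = ζ ^ m φ` with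
`φ = g ^ m f'²` analytic and `φ 0 = ρ ^ (m + 2)`, and `φ = φ 0 + O(ζ)` gives the expansion of the
pullback. For an invariant polar part with top index `N`, all terms but the top one are
`O(ζ ^ (-(N + 1)))`, so comparing coefficients of `ζ ^ (-(N + 2))` gives `c_N ρ ^ (-N) = c_N`,
which forces `N = 0` when no positive power of `ρ` is `1`.
-/

open Filter Topology

/-- The paper's `u = O(ζ ^ n)` for germs at `0`: `u = ζ ^ n * v` off `0`, with `v` analytic. -/
def LaurentOrderGE (n : ℤ) (u : ℂ → ℂ) : Prop :=
  ∃ v : ℂ → ℂ, AnalyticAt ℂ v 0 ∧ ∀ᶠ ζ in 𝓝[≠] (0 : ℂ), u ζ = ζ ^ n * v ζ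

namespace LaurentOrderGE

variable {n m : ℤ} {u w : ℂ → ℂ}

theorem sub (hu : LaurentOrderGE n u) (hw : LaurentOrderGE n w) :
    LaurentOrderGE n fun ζ => u ζ - w ζ := by
  obtain ⟨v, hv, hev⟩ := hu
  obtain ⟨v', hv', hev'⟩ := hw
  refine ⟨fun ζ => v ζ - v' ζ, hv.sub hv', ?_⟩
  filter_upwards [hev, hev'] with ζ h h'
  rw [h, h', mul_sub]

theorem add (hu : LaurentOrderGE n u) (hw : LaurentOrderGE n w) :
    LaurentOrderGE n fun ζ => u ζ + w ζ := by
  obtain ⟨v, hv, hev⟩ := hu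
  obtain ⟨v', hv', hev'⟩ := hw
  refine ⟨fun ζ => v ζ + v' ζ, hv.add hv', ?_⟩
  filter_upwards [hev, hev'] with ζ h h'
  rw [h, h', mul_add]

theorem const_mul (a : ℂ) (hu : LaurentOrderGE n u) : LaurentOrderGE n fun ζ => a * u ζ := by
  obtain ⟨v, hv, hev⟩ := hu
  refine ⟨fun ζ => a * v ζ, analyticAt_const.mul hv, ?_⟩
  filter_upwards [hev] with ζ h
  rw [h, mul_left_comm]

theorem finset_sum {ι : Type*} (s : Finset ι) {u : ι → ℂ → ℂ}
    (hu : ∀ i ∈ s, LaurentOrderGE n (u i)) : LaurentOrderGE n fun ζ => ∑ i ∈ s, u i ζ := by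
  classical
  induction s using Finset.induction_on with
  | empty => exact ⟨0, analyticAt_const, by simp⟩
  | insert i s hi ih =>
    simp only [Finset.sum_insert hi]
    exact (hu i (s.mem_insert_self i)).add (ih fun k hk => hu k (Finset.mem_insert_of_mem hk))

theorem mono (hu : LaurentOrderGE n u) (hmn : m ≤ n) : LaurentOrderGE m u := by
  obtain ⟨v, hv, hev⟩ := hu
  refine ⟨fun ζ => ζ ^ (n - m).toNat * v ζ, (analyticAt_id.pow _).mul hv, ?_⟩
  filter_upwards [hev, self_mem_nhdsWithin] with ζ h (hζ : ζ ≠ 0)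
  rw [h, ← mul_assoc, ← zpow_natCast, Int.toNat_of_nonneg (sub_nonneg.2 hmn), ← zpow_add₀ hζ,
    add_sub_cancel]

end LaurentOrderGE

theorem laurentOrderGE_zpow (n : ℤ) : LaurentOrderGE n fun ζ => ζ ^ n :=
  ⟨fun _ => 1, analyticAt_const, Eventually.of_forall fun _ => (mul_one _).symm⟩

theorem eq_zero_of_laurentOrderGE_const_mul_zpow {a : ℂ} {n : ℤ}
    (h : LaurentOrderGE (n + 1) fun ζ => a * ζ ^ n) : a = 0 := by
  obtain ⟨v, hv, hev⟩ := h
  have hav : (fun _ => a) =ᶠ[𝓝[≠] (0 : ℂ)] fun ζ => ζ * v ζ := by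
    filter_upwards [hev, self_mem_nhdsWithin] with ζ h (hζ : ζ ≠ 0)
    rw [zpow_add_one₀ hζ, mul_comm, mul_assoc] at h
    exact mul_left_cancel₀ (zpow_ne_zero n hζ) h
  have hlim : Tendsto (fun ζ => ζ * v ζ) (𝓝[≠] (0 : ℂ)) (𝓝 0) := by
    simpa using ((continuousAt_id.fun_mul hv.continuousAt).tendsto).mono_left nhdsWithin_le_nhds
  exact tendsto_nhds_unique (tendsto_const_nhds.congr' hav) hlim

theorem AnalyticAt.dslope {φ : ℂ → ℂ} {z : ℂ} (hφ : AnalyticAt ℂ φ z) :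
    AnalyticAt ℂ (dslope φ z) z :=
  let ⟨p, hp⟩ := hφ
  ⟨p.fslope, hp.has_fpower_series_dslope_fslope⟩

theorem eq_add_mul_dslope (φ : ℂ → ℂ) (ζ : ℂ) : φ ζ = φ 0 + ζ * dslope φ 0 ζ :=
  eq_add_of_sub_eq' (by simpa using (sub_smul_dslope φ 0 ζ).symm)

theorem laurentOrderGE_sub_leading {n : ℤ} {u φ : ℂ → ℂ} (hφ : AnalyticAt ℂ φ 0)
    (hu : ∀ᶠ ζ in 𝓝[≠] (0 : ℂ), u ζ = ζ ^ n * φ ζ) :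
    LaurentOrderGE (n + 1) fun ζ => u ζ - φ 0 * ζ ^ n := by
  refine ⟨dslope φ 0, hφ.dslope, ?_⟩
  filter_upwards [hu, self_mem_nhdsWithin] with ζ h (hζ : ζ ≠ 0)
  rw [h, eq_add_mul_dslope φ ζ, zpow_add_one₀ hζ]
  ring

section Pullback

variable {f : ℂ → ℂ}

/-- `φ = g ^ m * f'²`, where `f ζ = ζ * g ζ` and `g = dslope f 0`. -/
theorem exists_pullback_zpow_eq (hf : AnalyticAt ℂ f 0) (hf0 : f 0 = 0) (hf' : deriv f 0 ≠ 0)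
    (m : ℤ) :
    ∃ φ : ℂ → ℂ, AnalyticAt ℂ φ 0 ∧ φ 0 = deriv f 0 ^ (m + 2) ∧
      ∀ ζ, f ζ ^ m * deriv f ζ ^ 2 = ζ ^ m * φ ζ := by
  have hg0 : dslope f 0 0 = deriv f 0 := dslope_same f 0
  refine ⟨fun ζ => dslope f 0 ζ ^ m * deriv f ζ ^ 2,
    (hf.dslope.fun_zpow (hg0 ▸ hf')).mul (hf.deriv.fun_pow 2), ?_, fun ζ => ?_⟩
  · simp only [hg0]
    rw [← zpow_natCast, ← zpow_add₀ hf']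
    norm_num
  · rw [eq_add_mul_dslope f ζ, hf0, zero_add, mul_zpow, mul_assoc]

theorem laurentOrderGE_pullback (hf : AnalyticAt ℂ f 0) (hf0 : f 0 = 0) (hf' : deriv f 0 ≠ 0)
    (m : ℤ) : LaurentOrderGE m fun ζ => f ζ ^ m * deriv f ζ ^ 2 :=
  let ⟨φ, hφ, _, hfφ⟩ := exists_pullback_zpow_eq hf hf0 hf' m
  ⟨φ, hφ, Eventually.of_forall hfφ⟩

theorem laurentOrderGE_pullback_sub (hf : AnalyticAt ℂ f 0) (hf0 : f 0 = 0)
    (hf' : deriv f 0 ≠ 0) (m : ℤ) :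
    LaurentOrderGE (m + 1) fun ζ => f ζ ^ m * deriv f ζ ^ 2 - deriv f 0 ^ (m + 2) * ζ ^ m := by
  obtain ⟨φ, hφ, hφ0, hfφ⟩ := exists_pullback_zpow_eq hf hf0 hf' m
  simpa only [hφ0] using laurentOrderGE_sub_leading hφ (Eventually.of_forall hfφ)

/-- Pullback multiplies the top coefficient `c N` by `f'(0) ^ (-N)`, up to `O(ζ ^ (-(N + 1)))`. -/
theorem mul_zpow_sub_one_eq_zero_of_pullback_sum (hf : AnalyticAt ℂ f 0) (hf0 : f 0 = 0)
    (hf' : deriv f 0 ≠ 0) {T : Finset ℕ} {N : ℕ} (hN : N ∈ T) (hT : ∀ i ∈ T, i ≤ N) (c : ℕ → ℂ)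
    (hinv : LaurentOrderGE (-1) fun ζ =>
      ∑ i ∈ T, c i * (f ζ ^ (-((i : ℤ) + 2)) * deriv f ζ ^ 2 - ζ ^ (-((i : ℤ) + 2)))) :
    c N * (deriv f 0 ^ (-(N : ℤ)) - 1) = 0 := by
  have hlower : LaurentOrderGE (-(N + 2) + 1) fun ζ => ∑ i ∈ T.erase N,
      c i * (f ζ ^ (-((i : ℤ) + 2)) * deriv f ζ ^ 2 - ζ ^ (-((i : ℤ) + 2))) := by
    refine LaurentOrderGE.finset_sum _ fun i hi => ?_
    have hiN : i < N :=
      lt_of_le_of_ne (hT i (Finset.mem_of_mem_erase hi)) (Finset.ne_of_mem_erase hi)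
    have hterm := (laurentOrderGE_pullback hf hf0 hf' (-((i : ℤ) + 2))).sub (laurentOrderGE_zpow _)
    exact (hterm.const_mul (c i)).mono (by omega)
  have htop := (laurentOrderGE_pullback_sub hf hf0 hf' (-((N : ℤ) + 2))).const_mul (c N)
  rw [show -((N : ℤ) + 2) + 2 = -N by ring] at htop
  refine eq_zero_of_laurentOrderGE_const_mul_zpow (n := -((N : ℤ) + 2)) ?_
  convert ((hinv.mono (by omega)).sub (hlower.add htop)) using 2 with ζ
  rw [← T.sum_erase_add _ hN]
  ring

end Pullback

/-- Let `f` be a holomorphic germ fixing `0` with `f'(0) = ρ ≠ 0`.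
(1) For every `j ∈ ℤ`, `f^*(dζ²/ζ^{j+2}) = ρ^{−j} dζ²/ζ^{j+2} + O(dζ²/ζ^{j+1})`, where the
pullback of the quadratic differential `g dζ²` has coefficient `g(f(ζ)) f'(ζ)²`.
(2) Consequently, if `ρ^j ≠ 1` for all `j ≥ 1`, then any polar part
`∑_j c_j dζ²/ζ^{j+2}` invariant under `f^*` (i.e. whose pullback differs from it by
`O(dζ²/ζ)`) is a multiple of `dζ²/ζ²`, i.e. `c_j = 0` for `j ≥ 1`. -/
theorem pullback_polar_part (f : ℂ → ℂ) (ρ : ℂ)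
    (hf : AnalyticAt ℂ f 0) (hf0 : f 0 = 0) (hρ : deriv f 0 = ρ) (hρ0 : ρ ≠ 0) :
    (∀ j : ℤ, ∃ h : ℂ → ℂ, AnalyticAt ℂ h 0 ∧ ∀ᶠ ζ in 𝓝[≠] (0 : ℂ),
        (f ζ) ^ (-(j + 2)) * (deriv f ζ) ^ 2
          = ρ ^ (-j) * ζ ^ (-(j + 2)) + ζ ^ (-(j + 1)) * h ζ) ∧
    ((∀ j : ℕ, 1 ≤ j → ρ ^ j ≠ 1) →
      ∀ c : ℕ → ℂ, (Function.support c).Finite →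
        (∃ h : ℂ → ℂ, AnalyticAt ℂ h 0 ∧ ∀ᶠ ζ in 𝓝[≠] (0 : ℂ),
          (∑ᶠ j : ℕ, c j * (f ζ) ^ (-((j : ℤ) + 2))) * (deriv f ζ) ^ 2
            = (∑ᶠ j : ℕ, c j * ζ ^ (-((j : ℤ) + 2))) + ζ⁻¹ * h ζ) →
        ∀ j : ℕ, 1 ≤ j → c j = 0) := by
  subst hρ
  refine ⟨fun j => ?_, fun hρ1 c hc hinv j hj => ?_⟩
  · obtain ⟨h, hh, hev⟩ := laurentOrderGE_pullback_sub hf hf0 hρ0 (-(j + 2))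
    refine ⟨h, hh, hev.mono fun ζ hζ => ?_⟩
    rw [show -(j + 2) + 2 = -j by ring, show -(j + 2) + 1 = -(j + 1) by ring] at hζ
    exact eq_add_of_sub_eq' hζ
  by_contra hcj
  set T := hc.toFinset
  have hjT : j ∈ T := hc.mem_toFinset.2 hcj
  have hNT : T.max' ⟨j, hjT⟩ ∈ T := T.max'_mem _
  have hsum (a : ℕ → ℂ) : ∑ᶠ i, c i * a i = ∑ i ∈ T, c i * a i :=
    finsum_eq_sum_of_support_subset _ (hc.coe_toFinset ▸ Function.support_mul_subset_left c a)
  have hcoeff := mul_zpow_sub_one_eq_zero_of_pullback_sum hf hf0 hρ0 hNT (T.le_max' · ·) c <| by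
    obtain ⟨h, hh, hev⟩ := hinv
    refine ⟨h, hh, hev.mono fun ζ hζ => ?_⟩
    rw [hsum, hsum, Finset.sum_mul] at hζ
    simp only [mul_sub, Finset.sum_sub_distrib, ← mul_assoc, hζ, zpow_neg_one]
    ring
  rw [mul_eq_zero, sub_eq_zero, zpow_neg, inv_eq_one, zpow_natCast] at hcoeff
  exact hcoeff.elim (hc.mem_toFinset.1 hNT) (hρ1 _ (hj.trans (T.le_max' j hjT)))
end

section
/- Let f(ζ) = ρ(ζ + ζ^{N+1} + αζ^{2N+1}) + O(ζ^{2N+2}) be a parabolic germ with ρ a primitive n-th root of unity, N = νn, and β = (N+1)/2 − α. Then f^*(dζ²/ζ^{j+2}) = ρ̄^j (1 + (2N−j)ζ^N + (3N² − (5/2)jN + (1/2)j² + (j−4N)β)ζ^{2N} + O(ζ^{2N+1})) · dζ²/ζ^{j+2}. -/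
/-!
Write `f = ρ ζ g` with `g = 1 + ζ^N + α ζ^{2N} + O(ζ^{2N+1})`. Then `f' = ρ (ζ g)'` and
`f^{-(j+2)} f'^2 = ρ^{-j} ζ^{-(j+2)} g^{-(j+2)} ((ζ g)')^2`, with `ρ^{-j} = ρ̄^j` as `|ρ| = 1`.
For `N > 0`, germs `a₀ + a₁ ζ^N + a₂ ζ^{2N} + O(ζ^{2N+1})` with analytic remainder are closed
under products, inverses of those with `a₀ = 1`, and hence integer powers, while `g ↦ (ζ g)'`
multiplies the three coefficients by `1`, `N + 1`, `2N + 1`; multiplying out the truncated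
expansions gives the stated coefficients.
-/

open Filter Topology

def HasExpansion₂ (N : ℕ) (g : ℂ → ℂ) (a₀ a₁ a₂ : ℂ) : Prop :=
  ∃ r : ℂ → ℂ, AnalyticAt ℂ r 0 ∧
    ∀ᶠ ζ in 𝓝 0, g ζ = a₀ + a₁ * ζ ^ N + a₂ * ζ ^ (2 * N) + ζ ^ (2 * N + 1) * r ζ

namespace HasExpansion₂

variable {N : ℕ} {g g₁ g₂ : ℂ → ℂ} {a₀ a₁ a₂ b₀ b₁ b₂ : ℂ}

theorem polynomial (N : ℕ) (a₀ a₁ a₂ : ℂ) :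
    HasExpansion₂ N (fun ζ => a₀ + a₁ * ζ ^ N + a₂ * ζ ^ (2 * N)) a₀ a₁ a₂ :=
  ⟨0, analyticAt_const, .of_forall fun ζ => by simp⟩

theorem mul (hN : 0 < N) (h₁ : HasExpansion₂ N g₁ a₀ a₁ a₂) (h₂ : HasExpansion₂ N g₂ b₀ b₁ b₂) :
    HasExpansion₂ N (fun ζ => g₁ ζ * g₂ ζ)
      (a₀ * b₀) (a₀ * b₁ + a₁ * b₀) (a₀ * b₂ + a₁ * b₁ + a₂ * b₀) := by
  obtain ⟨r₁, hr₁, hg₁⟩ := h₁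
  obtain ⟨r₂, hr₂, hg₂⟩ := h₂
  obtain ⟨M, rfl⟩ := Nat.exists_eq_add_of_lt hN
  refine ⟨fun ζ => (a₁ * b₂ + a₂ * b₁) * ζ ^ M + a₂ * b₂ * ζ ^ (2 * M + 1)
      + r₁ ζ * (b₀ + b₁ * ζ ^ (M + 1) + b₂ * ζ ^ (2 * M + 2))
      + r₂ ζ * (a₀ + a₁ * ζ ^ (M + 1) + a₂ * ζ ^ (2 * M + 2))
      + ζ ^ (2 * M + 3) * (r₁ ζ * r₂ ζ), by fun_prop, ?_⟩
  filter_upwards [hg₁, hg₂] with ζ e₁ e₂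
  rw [e₁, e₂]; ring

theorem inv (hN : 0 < N) (h : HasExpansion₂ N g 1 a₁ a₂) :
    HasExpansion₂ N (fun ζ => (g ζ)⁻¹) 1 (-a₁) (a₁ ^ 2 - a₂) := by
  -- With `B` the truncated inverse, `g B = 1 + ζ^{2N+1} k`, so `g⁻¹ = B - ζ^{2N+1} k g⁻¹`.
  have hgB := h.mul hN (polynomial N 1 (-a₁) (a₁ ^ 2 - a₂))
  obtain ⟨r, hr, hg⟩ := h
  obtain ⟨k, hk, hgB⟩ := hgB
  set G : ℂ → ℂ := fun ζ => 1 + a₁ * ζ ^ N + a₂ * ζ ^ (2 * N) + ζ ^ (2 * N + 1) * r ζ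
  have hG0 : G 0 ≠ 0 := by simp [G, hN.ne']
  have hGan : AnalyticAt ℂ G 0 := by fun_prop
  refine ⟨fun ζ => -(k ζ * (G ζ)⁻¹), (hk.mul (hGan.inv hG0)).neg, ?_⟩
  filter_upwards [hg, hgB, hGan.continuousAt.eventually_ne hG0] with ζ e eB hζ
  change g ζ = G ζ at e
  clear_value G
  rw [e] at eB ⊢
  field_simp
  linear_combination -eB

theorem pow (hN : 0 < N) (h : HasExpansion₂ N g 1 a₁ a₂) (k : ℕ) :
    HasExpansion₂ N (fun ζ => g ζ ^ k) 1 (k * a₁) (k * a₂ + k * (k - 1) / 2 * a₁ ^ 2) := by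
  induction k with
  | zero => simpa using polynomial N 1 0 0
  | succ k ih =>
    simp_rw [pow_succ]
    convert ih.mul hN h using 1 <;> push_cast <;> ring

theorem zpow (hN : 0 < N) (h : HasExpansion₂ N g 1 a₁ a₂) (m : ℤ) :
    HasExpansion₂ N (fun ζ => g ζ ^ m) 1 (m * a₁) (m * a₂ + m * (m - 1) / 2 * a₁ ^ 2) := by
  cases m with
  | ofNat k => simpa using h.pow hN k
  | negSucc k =>
    simp_rw [zpow_negSucc]
    convert (h.pow hN (k + 1)).inv hN using 1 <;> push_cast [Int.negSucc_eq] <;> ring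

theorem deriv_id_mul (h : HasExpansion₂ N g a₀ a₁ a₂) :
    HasExpansion₂ N (deriv fun ζ => ζ * g ζ) a₀ ((N + 1) * a₁) ((2 * N + 1) * a₂) := by
  obtain ⟨r, hr, hg⟩ := h
  refine ⟨fun ζ => (2 * N + 2) * r ζ + ζ * deriv r ζ, by fun_prop, ?_⟩
  have hmul : (fun ζ => ζ * g ζ) =ᶠ[𝓝 0] fun ζ =>
      a₀ * ζ + a₁ * ζ ^ (N + 1) + a₂ * ζ ^ (2 * N + 1) + ζ ^ (2 * N + 2) * r ζ := by
    filter_upwards [hg] with ζ e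
    rw [e]; ring
  filter_upwards [hmul.deriv, hr.eventually_analyticAt] with ζ e hζ
  have hd : HasDerivAt (fun ζ =>
      a₀ * ζ + a₁ * ζ ^ (N + 1) + a₂ * ζ ^ (2 * N + 1) + ζ ^ (2 * N + 2) * r ζ) _ ζ :=
    ((((hasDerivAt_id' ζ).const_mul a₀).add ((hasDerivAt_pow (N + 1) ζ).const_mul a₁)).add
      ((hasDerivAt_pow (2 * N + 1) ζ).const_mul a₂)).add
      ((hasDerivAt_pow (2 * N + 2) ζ).fun_mul hζ.differentiableAt.hasDerivAt)
  rw [e, hd.deriv]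
  simp only [Nat.add_sub_cancel, show 2 * N + 2 - 1 = 2 * N + 1 by omega]
  push_cast
  ring

end HasExpansion₂

/-- Let `f(ζ) = ρ(ζ + ζ^{N+1} + αζ^{2N+1}) + O(ζ^{2N+2})` be a parabolic
germ with `ρ` a primitive `n`-th root of unity, `N = νn`, and `β = (N+1)/2 − α`.  Then
`f^*(dζ²/ζ^{j+2}) = ρ̄^j (1 + (2N−j)ζ^N + (3N² − (5/2)jN + (1/2)j² + (j−4N)β)ζ^{2N}
+ O(ζ^{2N+1})) dζ²/ζ^{j+2}` for every integer `j`. -/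
theorem parabolic_pullback_expansion (f : ℂ → ℂ) (n N ν : ℕ) (ρ α β : ℂ)
    (hn : 0 < n) (hν : 0 < ν) (hN : N = ν * n)
    (hρ : IsPrimitiveRoot ρ n)
    (hβ : β = ((N : ℂ) + 1) / 2 - α)
    (hf : ∃ h : ℂ → ℂ, AnalyticAt ℂ h 0 ∧ ∀ᶠ ζ in 𝓝 (0 : ℂ),
      f ζ = ρ * (ζ + ζ ^ (N + 1) + α * ζ ^ (2 * N + 1)) + ζ ^ (2 * N + 2) * h ζ) :
    ∀ j : ℤ, ∃ h : ℂ → ℂ, AnalyticAt ℂ h 0 ∧ ∀ᶠ ζ in 𝓝[≠] (0 : ℂ),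
      (f ζ) ^ (-(j + 2)) * (deriv f ζ) ^ 2
        = (starRingEnd ℂ ρ) ^ j *
            (1 + (2 * (N : ℂ) - (j : ℂ)) * ζ ^ N
              + (3 * (N : ℂ) ^ 2 - 5 / 2 * (j : ℂ) * (N : ℂ) + 1 / 2 * (j : ℂ) ^ 2
                  + ((j : ℂ) - 4 * (N : ℂ)) * β) * ζ ^ (2 * N)
              + ζ ^ (2 * N + 1) * h ζ) * ζ ^ (-(j + 2)) := by
  intro j
  obtain ⟨h, hh, hfh⟩ := hf
  have hN0 : 0 < N := hN ▸ Nat.mul_pos hν hn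
  have hρ0 : ρ ≠ 0 := hρ.ne_zero hn.ne'
  have hconj : starRingEnd ℂ ρ = ρ⁻¹ :=
    (Complex.inv_eq_conj (Complex.norm_eq_one_of_pow_eq_one hρ.pow_eq_one hn.ne')).symm
  have hρpow : ρ ^ (-(j + 2)) * ρ ^ 2 = ρ⁻¹ ^ j := by
    rw [inv_zpow', ← zpow_natCast, ← zpow_add₀ hρ0]; push_cast; ring_nf
  set g : ℂ → ℂ := fun ζ => 1 + ζ ^ N + α * ζ ^ (2 * N) + ζ ^ (2 * N + 1) * (ρ⁻¹ * h ζ)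
  have hg : HasExpansion₂ N g 1 1 α :=
    ⟨fun ζ => ρ⁻¹ * h ζ, by fun_prop, .of_forall fun _ => by simp [g]⟩
  have hfg : f =ᶠ[𝓝 0] fun ζ => ρ * (ζ * g ζ) := by
    filter_upwards [hfh] with ζ e
    simp only [e, g]; field_simp; ring
  have hf' : deriv f =ᶠ[𝓝 0] fun ζ => ρ * deriv (fun ζ => ζ * g ζ) ζ := by
    filter_upwards [hfg.deriv] with ζ e
    rw [e, deriv_const_mul_field']
  obtain ⟨r, hr, hexp⟩ := (hg.zpow hN0 (-(j + 2))).mul hN0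
    (hg.deriv_id_mul.mul hN0 hg.deriv_id_mul)
  refine ⟨r, hr, nhdsWithin_le_nhds ?_⟩
  filter_upwards [hfg, hf', hexp] with ζ e e' eG
  rw [e, e', mul_zpow, mul_zpow, hconj, ← hρpow, hβ]
  push_cast at eG
  linear_combination (ρ ^ (-(j + 2)) * ρ ^ 2 * ζ ^ (-(j + 2))) * eG
end

section
/- Let f be a rational map of degree D > 1 and q a nonzero meromorphic quadratic differential with f^* q = λ q for some λ ≠ 0 and with no zeros and at worst simple poles (ord_x q ∈ {−1, 0} for all x). Then q has exactly four poles, the set of poles is forward invariant under f, every preimage of a pole is either a pole or a simple critical point, every critical value of f is a pole, and no critical point of f is a pole. -/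
open scoped Classical OnePoint
open Polynomial Filter

/-- Evaluation of a rational map in the affine chart. -/
noncomputable def fe (f : RatFunc ℂ) : ℂ → ℂ := fun z => f.num.eval z / f.denom.eval z

/-- Evaluation of a rational map `f` as a self-map of `P¹ = ℂ ∪ {∞}`. -/
noncomputable def evalSphere (f : RatFunc ℂ) : OnePoint ℂ → OnePoint ℂ :=
  fun x => (show Option ℂ from x).elim
    (if f.denom.natDegree < f.num.natDegree then ∞
      else ((f.num.coeff f.denom.natDegree / f.denom.leadingCoeff : ℂ) : OnePoint ℂ))
    (fun a => if f.denom.eval a = 0 then ∞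
      else ((f.num.eval a / f.denom.eval a : ℂ) : OnePoint ℂ))

/-- Composition of rational functions. -/
noncomputable def ratComp (f g : RatFunc ℂ) : RatFunc ℂ :=
  (Polynomial.aeval g f.num) / (Polynomial.aeval g f.denom)

/-- Local degree of `f` at a finite point `w`. -/
noncomputable def degAt (f : RatFunc ℂ) (w : ℂ) : ℕ :=
  if f.denom.eval w = 0 then f.denom.rootMultiplicity w
  else ((f - RatFunc.C (f.num.eval w / f.denom.eval w)).num).rootMultiplicity w

/-- Local degree of `f` at a point of the sphere. -/
noncomputable def degAtSphere (f : RatFunc ℂ) (x : OnePoint ℂ) : ℕ :=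
  (show Option ℂ from x).elim (degAt (ratComp f (1 / RatFunc.X)) 0) (fun a => degAt f a)

/-- Order of the quadratic differential `g dz²` at a finite point. -/
noncomputable def ordAt (g : RatFunc ℂ) (a : ℂ) : ℤ :=
  (g.num.rootMultiplicity a : ℤ) - (g.denom.rootMultiplicity a : ℤ)

/-- Order of the quadratic differential `g dz²` at `∞` (`dz² = w⁻⁴ dw²`). -/
noncomputable def ordInfQD (g : RatFunc ℂ) : ℤ :=
  (g.denom.natDegree : ℤ) - (g.num.natDegree : ℤ) - 4

/-- Order of the quadratic differential `g dz²` at a point of the sphere. -/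
noncomputable def qdOrd (g : RatFunc ℂ) (x : OnePoint ℂ) : ℤ :=
  (show Option ℂ from x).elim (ordInfQD g) (fun a => ordAt g a)

/-!
Write `q` for the quadratic differential `q(z) dz²`. Comparing orders on both sides of
`f^*q = λq` at a point `x` of the sphere gives
`ord_x q = deg_x f · (ord_{f(x)} q + 2) - 2`: in the affine chart because composing with `f`
multiplies orders by the local degree and `ord_x f' = deg_x f - 1` (or `-deg_x f - 1` at a pole
of `f`), and at `∞` by the same computation for `f(1/w)`, since `dz² = w⁻⁴ dw²` turns
`q dz²` into `(q ∘ (1/w)) · (d(1/w))² dw²`. As all orders lie in `{-1, 0}`, this identity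
yields the four local statements by a case check.

For the count: `q` has no zeros in `ℂ`, so its numerator is constant and its finite poles are
the simple roots of its denominator, `deg (denom q)` of them, while
`ord_∞ q = deg (denom q) - 4 ∈ {-1, 0}`. Either way there are four poles.
-/

local notation "ι" => algebraMap ℂ[X] (RatFunc ℂ)

section Order

theorem ordAt_div_algebraMap {A B : ℂ[X]} (hA : A ≠ 0) (hB : B ≠ 0) (a : ℂ) :
    ordAt (ι A / ι B) a = (A.rootMultiplicity a : ℤ) - B.rootMultiplicity a := by
  set g := ι A / ι B
  have hg : g ≠ 0 := div_ne_zero (RatFunc.algebraMap_ne_zero hA) (RatFunc.algebraMap_ne_zero hB)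
  have hcross : g.num * B = A * g.denom := (RatFunc.num_mul_eq_mul_denom_iff hB).mpr rfl
  have h := congrArg (rootMultiplicity a) hcross
  rw [rootMultiplicity_mul (mul_ne_zero (RatFunc.num_ne_zero hg) hB),
    rootMultiplicity_mul (mul_ne_zero hA (RatFunc.denom_ne_zero g))] at h
  unfold ordAt
  omega

theorem ordAt_C (c a : ℂ) : ordAt (RatFunc.C c) a = 0 := by
  simp [ordAt, RatFunc.num_C, RatFunc.denom_C, rootMultiplicity_C]

theorem ordAt_mul {g h : RatFunc ℂ} (hg : g ≠ 0) (hh : h ≠ 0) (a : ℂ) :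
    ordAt (g * h) a = ordAt g a + ordAt h a := by
  have hnum := mul_ne_zero (RatFunc.num_ne_zero hg) (RatFunc.num_ne_zero hh)
  have hden := mul_ne_zero (RatFunc.denom_ne_zero g) (RatFunc.denom_ne_zero h)
  have hrep : g * h = ι (g.num * h.num) / ι (g.denom * h.denom) := by
    rw [map_mul, map_mul, ← div_mul_div_comm, RatFunc.num_div_denom, RatFunc.num_div_denom]
  rw [hrep, ordAt_div_algebraMap hnum hden, rootMultiplicity_mul hnum, rootMultiplicity_mul hden]
  unfold ordAt
  push_cast
  ring

theorem ordAt_div {g h : RatFunc ℂ} (hg : g ≠ 0) (hh : h ≠ 0) (a : ℂ) :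
    ordAt (g / h) a = ordAt g a - ordAt h a := by
  have h := ordAt_mul (div_ne_zero hg hh) hh a
  rw [div_mul_cancel₀ g hh] at h
  omega

theorem ordAt_pow {g : RatFunc ℂ} (hg : g ≠ 0) (n : ℕ) (a : ℂ) :
    ordAt (g ^ n) a = n * ordAt g a := by
  induction n with
  | zero => simpa using ordAt_C 1 a
  | succ n ih => rw [pow_succ, ordAt_mul (pow_ne_zero _ hg) hg, ih]; push_cast; ring

theorem ordAt_multiset_prod {s : Multiset (RatFunc ℂ)} (hs : ∀ g ∈ s, g ≠ 0) (a : ℂ) :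
    ordAt s.prod a = (s.map (ordAt · a)).sum := by
  induction s using Multiset.induction_on with
  | empty => simpa using ordAt_C 1 a
  | cons g s ih =>
    rw [Multiset.prod_cons, ordAt_mul (hs g (s.mem_cons_self g))
      (Multiset.prod_ne_zero fun h0 => hs 0 (Multiset.mem_cons_of_mem h0) rfl),
      ih fun g hg => hs g (Multiset.mem_cons_of_mem hg), Multiset.map_cons, Multiset.sum_cons]

theorem num_eval_ne_zero_of_denom_eval_eq_zero {g : RatFunc ℂ} {a : ℂ}
    (ha : g.denom.eval a = 0) : g.num.eval a ≠ 0 := by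
  obtain ⟨u, v, huv⟩ := RatFunc.isCoprime_num_denom g
  intro h0
  simpa [h0, ha] using congrArg (eval a) huv

theorem ordAt_neg_iff_denom_eval_eq_zero {g : RatFunc ℂ} {a : ℂ} :
    ordAt g a < 0 ↔ g.denom.eval a = 0 := by
  refine ⟨fun h => ?_, fun ha => ?_⟩
  · by_contra ha
    rw [ordAt, rootMultiplicity_eq_zero ha] at h
    omega
  · have hd := (rootMultiplicity_pos (RatFunc.denom_ne_zero g)).mpr ha
    rw [ordAt, rootMultiplicity_eq_zero (num_eval_ne_zero_of_denom_eval_eq_zero ha)]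
    omega

end Order

section Evaluation

theorem fe_eq_eval (g : RatFunc ℂ) (z : ℂ) : fe g z = g.eval (RingHom.id ℂ) z := rfl

theorem denom_eval_ne_zero_of_eq_div {A B : ℂ[X]} {g : RatFunc ℂ} (hg : g = ι A / ι B)
    (hB : B ≠ 0) {z : ℂ} (hz : B.eval z ≠ 0) : g.denom.eval z ≠ 0 := by
  obtain ⟨k, hk⟩ := (RatFunc.denom_dvd hB).mpr ⟨A, hg⟩
  rw [hk, eval_mul] at hz
  exact left_ne_zero_of_mul hz

theorem fe_eq_of_eq_div {A B : ℂ[X]} {g : RatFunc ℂ} (hg : g = ι A / ι B)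
    (hB : B ≠ 0) {z : ℂ} (hz : B.eval z ≠ 0) : fe g z = A.eval z / B.eval z := by
  have hgz := denom_eval_ne_zero_of_eq_div hg hB hz
  have hcross := congrArg (eval z) ((RatFunc.num_mul_eq_mul_denom_iff hB).mpr hg)
  rw [eval_mul, eval_mul] at hcross
  rw [fe, div_eq_div_iff hgz hz, hcross]

theorem eventually_eval_ne_zero {p : ℂ[X]} (hp : p ≠ 0) :
    ∀ᶠ z in cofinite, p.eval z ≠ 0 := by
  simpa [eventually_cofinite] using p.finite_setOfPred_isRoot hp

theorem eventually_denom_eval_ne_zero (g : RatFunc ℂ) :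
    ∀ᶠ z in cofinite, g.denom.eval z ≠ 0 :=
  eventually_eval_ne_zero (RatFunc.denom_ne_zero g)

theorem eventually_fe_ne_zero {g : RatFunc ℂ} (hg : g ≠ 0) :
    ∀ᶠ z in cofinite, fe g z ≠ 0 := by
  filter_upwards [eventually_eval_ne_zero (RatFunc.num_ne_zero hg),
    eventually_denom_eval_ne_zero g] with z hnum hden
  exact div_ne_zero hnum hden

theorem eventually_fe_add (g h : RatFunc ℂ) :
    ∀ᶠ z in cofinite, fe (g + h) z = fe g z + fe h z := by
  filter_upwards [eventually_denom_eval_ne_zero g, eventually_denom_eval_ne_zero h] with z hg hh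
  exact RatFunc.eval_add _ _ hg hh

theorem eventually_fe_mul (g h : RatFunc ℂ) :
    ∀ᶠ z in cofinite, fe (g * h) z = fe g z * fe h z := by
  filter_upwards [eventually_denom_eval_ne_zero g, eventually_denom_eval_ne_zero h] with z hg hh
  exact RatFunc.eval_mul _ _ hg hh

theorem eventually_fe_pow (g : RatFunc ℂ) (n : ℕ) :
    ∀ᶠ z in cofinite, fe (g ^ n) z = fe g z ^ n := by
  induction n with
  | zero => exact Eventually.of_forall fun z => by simp [fe_eq_eval]
  | succ n ih =>
    filter_upwards [ih, eventually_fe_mul (g ^ n) g] with z hpow hmul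
    rw [pow_succ, hmul, hpow, pow_succ]

theorem eventually_fe_aeval (h : RatFunc ℂ) (p : ℂ[X]) :
    ∀ᶠ z in cofinite, fe (aeval h p) z = p.eval (fe h z) := by
  induction p using Polynomial.induction_on' with
  | add p q hp hq =>
    filter_upwards [hp, hq, eventually_fe_add (aeval h p) (aeval h q)] with z hp hq hadd
    rw [map_add, hadd, hp, hq, eval_add]
  | monomial n c =>
    filter_upwards [eventually_fe_mul (RatFunc.C c) (h ^ n), eventually_fe_pow h n]
      with z hmul hpow
    rw [aeval_monomial, RatFunc.algebraMap_eq_C, hmul, hpow, eval_monomial, fe_eq_eval,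
      RatFunc.eval_C, RingHom.id_apply]

theorem eq_of_eventually_fe_eq {g h : RatFunc ℂ} (hgh : ∀ᶠ z in cofinite, fe g z = fe h z) :
    g = h := by
  have hroot : ∀ᶠ z in cofinite, (g.num * h.denom - h.num * g.denom).IsRoot z := by
    filter_upwards [hgh, eventually_denom_eval_ne_zero g, eventually_denom_eval_ne_zero h]
      with z hz hg hh
    rw [fe, fe, div_eq_div_iff hg hh] at hz
    simp [hz]
  have hzero := eq_zero_of_infinite_isRoot _ (frequently_cofinite_iff_infinite.mp hroot.frequently)
  rw [← RatFunc.num_div_denom g, ← RatFunc.num_div_denom h,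
    div_eq_div_iff (RatFunc.algebraMap_ne_zero (RatFunc.denom_ne_zero g))
      (RatFunc.algebraMap_ne_zero (RatFunc.denom_ne_zero h)), ← map_mul, ← map_mul,
    sub_eq_zero.mp hzero]

end Evaluation

section LocalDegree

variable {h : RatFunc ℂ} {w : ℂ}

theorem sub_C_eq_div (h : RatFunc ℂ) (c : ℂ) :
    h - RatFunc.C c = ι (h.num - C c * h.denom) / ι h.denom := by
  rw [map_sub, map_mul, sub_div, RatFunc.num_div_denom, RatFunc.algebraMap_C,
    mul_div_cancel_right₀ _ (RatFunc.algebraMap_ne_zero (RatFunc.denom_ne_zero h))]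

theorem num_sub_C_mul_denom_ne_zero {c : ℂ} (hc : h ≠ RatFunc.C c) :
    h.num - C c * h.denom ≠ 0 := by
  intro h0
  rw [← sub_ne_zero, sub_C_eq_div, h0, map_zero, zero_div] at hc
  exact hc rfl

theorem degAt_eq_rootMultiplicity (hw : h.denom.eval w ≠ 0) (hc : h ≠ RatFunc.C (fe h w)) :
    degAt h w = (h.num - C (fe h w) * h.denom).rootMultiplicity w := by
  set c := fe h w
  have hsub : h - RatFunc.C c ≠ 0 := sub_ne_zero.mpr hc
  have hA := num_sub_C_mul_denom_ne_zero hc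
  have hsubw := denom_eval_ne_zero_of_eq_div (sub_C_eq_div h c) (RatFunc.denom_ne_zero h) hw
  have hcross := congrArg (rootMultiplicity w)
    ((RatFunc.num_mul_eq_mul_denom_iff (RatFunc.denom_ne_zero h)).mpr (sub_C_eq_div h c))
  rw [rootMultiplicity_mul (mul_ne_zero (RatFunc.num_ne_zero hsub) (RatFunc.denom_ne_zero h)),
    rootMultiplicity_mul (mul_ne_zero hA (RatFunc.denom_ne_zero _)),
    rootMultiplicity_eq_zero hw, rootMultiplicity_eq_zero hsubw] at hcross
  have hdeg : degAt h w = (h - RatFunc.C c).num.rootMultiplicity w := by rw [degAt, if_neg hw]; rfl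
  simpa [hdeg] using hcross

theorem ordAt_sub_C_fe (hw : h.denom.eval w ≠ 0) (hc : h ≠ RatFunc.C (fe h w)) :
    ordAt (h - RatFunc.C (fe h w)) w = degAt h w := by
  rw [sub_C_eq_div, ordAt_div_algebraMap (num_sub_C_mul_denom_ne_zero hc)
    (RatFunc.denom_ne_zero h), rootMultiplicity_eq_zero hw, degAt_eq_rootMultiplicity hw hc]
  simp

theorem ordAt_sub_C_of_fe_ne (hw : h.denom.eval w ≠ 0) {r : ℂ} (hr : fe h w ≠ r) :
    ordAt (h - RatFunc.C r) w = 0 := by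
  have hAw : ¬ (h.num - C r * h.denom).IsRoot w := by
    rw [IsRoot, eval_sub, eval_mul, eval_C, sub_eq_zero, ← div_eq_iff hw]
    exact hr
  rw [sub_C_eq_div, ordAt_div_algebraMap (fun h0 => hAw (by simp [h0]))
    (RatFunc.denom_ne_zero h), rootMultiplicity_eq_zero hAw, rootMultiplicity_eq_zero hw]
  simp

theorem ordAt_sub_C_of_denom_eval_eq_zero (hw : h.denom.eval w = 0) (r : ℂ) :
    ordAt (h - RatFunc.C r) w = -degAt h w := by
  have hAw : ¬ (h.num - C r * h.denom).IsRoot w := by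
    rw [IsRoot, eval_sub, eval_mul, hw, mul_zero, sub_zero]
    exact num_eval_ne_zero_of_denom_eval_eq_zero hw
  rw [sub_C_eq_div, ordAt_div_algebraMap (fun h0 => hAw (by simp [h0]))
    (RatFunc.denom_ne_zero h), rootMultiplicity_eq_zero hAw, degAt, if_pos hw]
  simp

end LocalDegree

section Derivative

/-- Quotient rule: `wronskian h.denom h.num = h.denom * h.num' - h.denom' * h.num`. -/
noncomputable def ratDeriv (h : RatFunc ℂ) : RatFunc ℂ :=
  ι (wronskian h.denom h.num) / ι (h.denom ^ 2)

theorem fe_ratDeriv (h : RatFunc ℂ) {z : ℂ} (hz : h.denom.eval z ≠ 0) :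
    fe (ratDeriv h) z = deriv (fe h) z := by
  rw [fe_eq_of_eq_div (g := ratDeriv h) rfl (pow_ne_zero 2 (RatFunc.denom_ne_zero h))
    (by simpa using hz)]
  change _ = deriv (fun w => h.num.eval w / h.denom.eval w) z
  rw [deriv_fun_div h.num.differentiableAt h.denom.differentiableAt hz, Polynomial.deriv,
    Polynomial.deriv, wronskian]
  simp only [eval_sub, eval_mul, eval_pow]
  ring

theorem rootMultiplicity_neg (p : ℂ[X]) (a : ℂ) :
    (-p).rootMultiplicity a = p.rootMultiplicity a := by
  classical
  simp [rootMultiplicity_eq_multiplicity, multiplicity_neg]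

theorem wronskian_ne_zero_and_rootMultiplicity {A B : ℂ[X]} {w : ℂ} (hA : A ≠ 0)
    (hAw : A.IsRoot w) (hBw : ¬ B.IsRoot w) :
    wronskian B A ≠ 0 ∧ (wronskian B A).rootMultiplicity w = A.rootMultiplicity w - 1 := by
  obtain ⟨U, hAU, hU⟩ := exists_eq_pow_rootMultiplicity_mul_and_not_dvd A hA w
  rw [dvd_iff_isRoot] at hU
  obtain ⟨e, he⟩ : ∃ e, A.rootMultiplicity w = e + 1 :=
    Nat.exists_eq_add_one.mpr ((rootMultiplicity_pos hA).mpr hAw)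
  set E := B * (C ((e : ℂ) + 1) * U + (X - C w) * derivative U) - derivative B * ((X - C w) * U)
  have hW : wronskian B A = E * (X - C w) ^ e := by
    rw [wronskian, hAU, he, derivative_mul, derivative_pow, derivative_X_sub_C]
    push_cast
    ring
  have hEw : ¬ E.IsRoot w := by
    simp only [E, IsRoot, eval_sub, eval_mul, eval_add, eval_X, eval_C, sub_self, zero_mul,
      mul_zero, add_zero, sub_zero]
    exact mul_ne_zero hBw (mul_ne_zero (Nat.cast_add_one_ne_zero e) hU)
  have hE : E ≠ 0 := fun h0 => hEw (by simp [h0])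
  rw [hW, rootMultiplicity_mul_X_sub_C_pow hE, rootMultiplicity_eq_zero hEw, he]
  exact ⟨mul_ne_zero hE (pow_ne_zero _ (X_sub_C_ne_zero w)), by simp⟩

variable {h : RatFunc ℂ} {w : ℂ}

theorem ratDeriv_ne_zero (hh : ∀ c, h ≠ RatFunc.C c) : ratDeriv h ≠ 0 := by
  intro h0
  rw [ratDeriv, div_eq_zero_iff, or_iff_left (RatFunc.algebraMap_ne_zero
    (pow_ne_zero 2 (RatFunc.denom_ne_zero h))),
    map_eq_zero_iff _ (RatFunc.algebraMap_injective ℂ),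
    (RatFunc.isCoprime_num_denom h).symm.wronskian_eq_zero_iff] at h0
  apply hh (h.num.coeff 0 / h.denom.coeff 0)
  conv_lhs => rw [← RatFunc.num_div_denom h, eq_C_of_derivative_eq_zero h0.1,
    eq_C_of_derivative_eq_zero h0.2]
  rw [RatFunc.algebraMap_C, RatFunc.algebraMap_C, ← map_div₀]

theorem ordAt_ratDeriv_of_denom_eval_ne_zero (hw : h.denom.eval w ≠ 0)
    (hc : h ≠ RatFunc.C (fe h w)) : ordAt (ratDeriv h) w = degAt h w - 1 := by
  set A := h.num - C (fe h w) * h.denom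
  have hAw : A.IsRoot w := by
    simp only [A, IsRoot, eval_sub, eval_mul, eval_C, fe]
    field_simp
    ring
  have hWA : wronskian h.denom A = wronskian h.denom h.num := by
    simp only [A, wronskian, derivative_sub, derivative_mul, derivative_C]
    ring
  obtain ⟨hW, hWrm⟩ := wronskian_ne_zero_and_rootMultiplicity
    (num_sub_C_mul_denom_ne_zero hc) hAw hw
  rw [hWA] at hW hWrm
  have hd := (rootMultiplicity_pos (num_sub_C_mul_denom_ne_zero hc)).mpr hAw
  rw [ratDeriv, ordAt_div_algebraMap hW (pow_ne_zero 2 (RatFunc.denom_ne_zero h)), hWrm,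
    rootMultiplicity_eq_zero (p := h.denom ^ 2) (by simpa using hw),
    degAt_eq_rootMultiplicity hw hc]
  omega

theorem ordAt_ratDeriv_of_denom_eval_eq_zero (hw : h.denom.eval w = 0) :
    ordAt (ratDeriv h) w = -degAt h w - 1 := by
  obtain ⟨hW, hWrm⟩ := wronskian_ne_zero_and_rootMultiplicity (RatFunc.denom_ne_zero h) hw
    (num_eval_ne_zero_of_denom_eval_eq_zero hw)
  have hd := (rootMultiplicity_pos (RatFunc.denom_ne_zero h)).mpr hw
  rw [ratDeriv, ← wronskian_neg_eq, ordAt_div_algebraMap (neg_ne_zero.mpr hW)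
    (pow_ne_zero 2 (RatFunc.denom_ne_zero h)), rootMultiplicity_neg, hWrm, pow_two,
    rootMultiplicity_mul (mul_ne_zero (RatFunc.denom_ne_zero h) (RatFunc.denom_ne_zero h)),
    degAt, if_pos hw]
  omega

end Derivative

section Composition

theorem transcendental_of_forall_ne_C {h : RatFunc ℂ} (hh : ∀ c, h ≠ RatFunc.C c) :
    Transcendental ℂ h := by
  intro halg
  obtain ⟨c, hc⟩ := minpoly.mem_range_of_degree_eq_one ℂ h
    (IsAlgClosed.degree_eq_one_of_irreducible ℂ (minpoly.irreducible halg.isIntegral))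
  exact hh c (by rw [← hc, RatFunc.algebraMap_eq_C])

theorem Transcendental.ne_C {h : RatFunc ℂ} (hh : Transcendental ℂ h) (c : ℂ) :
    h ≠ RatFunc.C c := by
  intro hc
  exact hh ⟨X - C c, X_sub_C_ne_zero c, by simp [hc, RatFunc.algebraMap_eq_C]⟩

theorem aeval_eq_C_mul_prod_sub (h : RatFunc ℂ) (p : ℂ[X]) :
    aeval h p = RatFunc.C p.leadingCoeff * (p.roots.map (h - RatFunc.C ·)).prod := by
  conv_lhs =>
    rw [← C_leadingCoeff_mul_prod_multiset_X_sub_C (p := p) IsAlgClosed.card_roots_eq_natDegree]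
  simp [map_multiset_prod, Multiset.map_map, RatFunc.algebraMap_eq_C]

variable {h : RatFunc ℂ} {w : ℂ}

theorem aeval_ne_zero_of_transcendental (hh : Transcendental ℂ h) {p : ℂ[X]} (hp : p ≠ 0) :
    aeval h p ≠ 0 :=
  fun h0 => hp (transcendental_iff.mp hh p h0)

theorem ordAt_aeval_eq_sum (hh : Transcendental ℂ h) {p : ℂ[X]} (hp : p ≠ 0) (w : ℂ) :
    ordAt (aeval h p) w = (p.roots.map fun r => ordAt (h - RatFunc.C r) w).sum := by
  have hfactors : ∀ g ∈ p.roots.map (h - RatFunc.C ·), g ≠ 0 := by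
    intro g hg
    obtain ⟨r, -, rfl⟩ := Multiset.mem_map.mp hg
    exact sub_ne_zero.mpr (hh.ne_C r)
  rw [aeval_eq_C_mul_prod_sub, ordAt_mul (by simpa using hp) (Multiset.prod_ne_zero
    fun h0 => hfactors 0 h0 rfl), ordAt_C, zero_add, ordAt_multiset_prod hfactors,
    Multiset.map_map]
  rfl

theorem ordAt_aeval_of_denom_eval_eq_zero (hh : Transcendental ℂ h) {p : ℂ[X]} (hp : p ≠ 0)
    (hw : h.denom.eval w = 0) : ordAt (aeval h p) w = -(degAt h w * p.natDegree) := by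
  simp [ordAt_aeval_eq_sum hh hp, ordAt_sub_C_of_denom_eval_eq_zero hw,
    IsAlgClosed.card_roots_eq_natDegree, mul_comm]

theorem ordAt_aeval_of_denom_eval_ne_zero (hh : Transcendental ℂ h) {p : ℂ[X]} (hp : p ≠ 0)
    (hw : h.denom.eval w ≠ 0) :
    ordAt (aeval h p) w = degAt h w * p.rootMultiplicity (fe h w) := by
  rw [ordAt_aeval_eq_sum hh hp, Multiset.sum_map_eq_nsmul_single (fe h w)
    fun r hr _ => ordAt_sub_C_of_fe_ne hw hr.symm, ordAt_sub_C_fe hw (hh.ne_C _), count_roots,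
    nsmul_eq_mul, mul_comm]

theorem ratComp_ne_zero {q : RatFunc ℂ} (hq : q ≠ 0) (hh : Transcendental ℂ h) :
    ratComp q h ≠ 0 :=
  div_ne_zero (aeval_ne_zero_of_transcendental hh (RatFunc.num_ne_zero hq))
    (aeval_ne_zero_of_transcendental hh (RatFunc.denom_ne_zero q))

theorem ordAt_ratComp_of_denom_eval_eq_zero {q : RatFunc ℂ} (hq : q ≠ 0)
    (hh : Transcendental ℂ h) (hw : h.denom.eval w = 0) :
    ordAt (ratComp q h) w = degAt h w * ((q.denom.natDegree : ℤ) - q.num.natDegree) := by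
  rw [ratComp, ordAt_div (aeval_ne_zero_of_transcendental hh (RatFunc.num_ne_zero hq))
    (aeval_ne_zero_of_transcendental hh (RatFunc.denom_ne_zero q)),
    ordAt_aeval_of_denom_eval_eq_zero hh (RatFunc.num_ne_zero hq) hw,
    ordAt_aeval_of_denom_eval_eq_zero hh (RatFunc.denom_ne_zero q) hw]
  ring

theorem ordAt_ratComp_of_denom_eval_ne_zero {q : RatFunc ℂ} (hq : q ≠ 0)
    (hh : Transcendental ℂ h) (hw : h.denom.eval w ≠ 0) :
    ordAt (ratComp q h) w = degAt h w * ordAt q (fe h w) := by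
  rw [ratComp, ordAt_div (aeval_ne_zero_of_transcendental hh (RatFunc.num_ne_zero hq))
    (aeval_ne_zero_of_transcendental hh (RatFunc.denom_ne_zero q)),
    ordAt_aeval_of_denom_eval_ne_zero hh (RatFunc.num_ne_zero hq) hw,
    ordAt_aeval_of_denom_eval_ne_zero hh (RatFunc.denom_ne_zero q) hw, ordAt]
  ring

theorem eventually_fe_ratComp (q : RatFunc ℂ) (hh : Transcendental ℂ h) :
    ∀ᶠ z in cofinite, fe (ratComp q h) z = fe q (fe h z) := by
  have hden := aeval_ne_zero_of_transcendental hh (RatFunc.denom_ne_zero q)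
  have hmul : ratComp q h * aeval h q.denom = aeval h q.num := div_mul_cancel₀ _ hden
  filter_upwards [eventually_fe_mul (ratComp q h) (aeval h q.denom),
    eventually_fe_aeval h q.num, eventually_fe_aeval h q.denom, eventually_fe_ne_zero hden]
    with z hz hnum hdenom hne
  rw [hmul, hnum, hdenom] at hz
  rw [hdenom] at hne
  change fe (ratComp q h) z = q.num.eval (fe h z) / q.denom.eval (fe h z)
  rw [eq_div_iff hne, hz]

end Composition

section Pullback

/-- `pullbackQD q h` encodes `h^*(q(z) dz²) = q(h(z)) h'(z)² dz²`. -/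
noncomputable def pullbackQD (q h : RatFunc ℂ) : RatFunc ℂ :=
  ratComp q h * ratDeriv h ^ 2

noncomputable def sphereValue (h : RatFunc ℂ) (w : ℂ) : OnePoint ℂ :=
  if h.denom.eval w = 0 then ∞ else (fe h w : OnePoint ℂ)

theorem evalSphere_coe (f : RatFunc ℂ) (w : ℂ) : evalSphere f w = sphereValue f w := rfl

theorem qdOrd_coe (q : RatFunc ℂ) (w : ℂ) : qdOrd q w = ordAt q w := rfl

theorem qdOrd_infty (q : RatFunc ℂ) : qdOrd q ∞ = ordInfQD q := rfl

theorem degAtSphere_coe (f : RatFunc ℂ) (w : ℂ) : degAtSphere f w = degAt f w := rfl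

theorem degAtSphere_infty (f : RatFunc ℂ) :
    degAtSphere f ∞ = degAt (ratComp f (1 / RatFunc.X)) 0 := rfl

variable {q h : RatFunc ℂ}

theorem eventually_fe_pullbackQD (q : RatFunc ℂ) (hh : Transcendental ℂ h) :
    ∀ᶠ z in cofinite, fe (pullbackQD q h) z = fe q (fe h z) * deriv (fe h) z ^ 2 := by
  filter_upwards [eventually_fe_mul (ratComp q h) (ratDeriv h ^ 2), eventually_fe_ratComp q hh,
    eventually_fe_pow (ratDeriv h) 2, eventually_denom_eval_ne_zero h]
    with z hmul hcomp hpow hz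
  rw [pullbackQD, hmul, hcomp, hpow, fe_ratDeriv h hz]

theorem pullbackQD_ne_zero (hq : q ≠ 0) (hh : Transcendental ℂ h) : pullbackQD q h ≠ 0 :=
  mul_ne_zero (ratComp_ne_zero hq hh) (pow_ne_zero 2 (ratDeriv_ne_zero hh.ne_C))

theorem ordAt_pullbackQD (hq : q ≠ 0) (hh : Transcendental ℂ h) (w : ℂ) :
    ordAt (pullbackQD q h) w = degAt h w * (qdOrd q (sphereValue h w) + 2) - 2 := by
  have hderiv : ratDeriv h ≠ 0 := ratDeriv_ne_zero hh.ne_C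
  rw [pullbackQD, ordAt_mul (ratComp_ne_zero hq hh) (pow_ne_zero 2 hderiv), ordAt_pow hderiv,
    sphereValue]
  by_cases hw : h.denom.eval w = 0
  · rw [if_pos hw, ordAt_ratComp_of_denom_eval_eq_zero hq hh hw,
      ordAt_ratDeriv_of_denom_eval_eq_zero hw, qdOrd_infty, ordInfQD]
    ring
  · rw [if_neg hw, ordAt_ratComp_of_denom_eval_ne_zero hq hh hw,
      ordAt_ratDeriv_of_denom_eval_ne_zero hw (hh.ne_C _), qdOrd_coe]
    ring

end Pullback

section Infinity

theorem num_one_div_X : (1 / RatFunc.X : RatFunc ℂ).num = 1 := by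
  rw [← RatFunc.algebraMap_X, ← map_one ι, RatFunc.num_div]
  simp

theorem denom_one_div_X : (1 / RatFunc.X : RatFunc ℂ).denom = X := by
  rw [← RatFunc.algebraMap_X, ← map_one ι, RatFunc.denom_div _ X_ne_zero]
  simp

theorem fe_one_div_X : fe (1 / RatFunc.X) = fun z => z⁻¹ := by
  funext z
  rw [fe, num_one_div_X, denom_one_div_X, eval_one, eval_X, one_div]

theorem denom_one_div_X_eval_zero : (1 / RatFunc.X : RatFunc ℂ).denom.eval 0 = 0 := by
  rw [denom_one_div_X, eval_X]

theorem degAt_one_div_X_zero : degAt (1 / RatFunc.X) 0 = 1 := by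
  rw [degAt, if_pos denom_one_div_X_eval_zero, denom_one_div_X]
  simpa using rootMultiplicity_X_sub_C_self (x := (0 : ℂ))

theorem transcendental_one_div_X : Transcendental ℂ (1 / RatFunc.X : RatFunc ℂ) := by
  refine transcendental_of_forall_ne_C fun c hc => ?_
  have hord := ordAt_neg_iff_denom_eval_eq_zero.mpr denom_one_div_X_eval_zero
  rw [hc, ordAt_C] at hord
  exact lt_irrefl 0 hord

theorem ordAt_pullbackQD_one_div_X {q : RatFunc ℂ} (hq : q ≠ 0) :
    ordAt (pullbackQD q (1 / RatFunc.X)) 0 = ordInfQD q := by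
  rw [ordAt_pullbackQD hq transcendental_one_div_X, degAt_one_div_X_zero, sphereValue,
    if_pos denom_one_div_X_eval_zero, qdOrd_infty]
  ring

theorem aeval_one_div_X_mul_X_pow {P : ℂ[X]} {N : ℕ} (hN : P.natDegree ≤ N) :
    aeval (1 / RatFunc.X : RatFunc ℂ) P * RatFunc.X ^ N = ι (P.reflect N) := by
  have : Invertible (RatFunc.X : RatFunc ℂ) := invertibleOfNonzero RatFunc.X_ne_zero
  have h := eval₂_reflect_mul_pow (algebraMap ℂ (RatFunc ℂ)) RatFunc.X N (P.reflect N)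
    (natDegree_reflect_le.trans (max_le le_rfl hN))
  rwa [reflect_reflect, invOf_eq_inv, ← one_div, ← aeval_def, ← aeval_def,
    RatFunc.aeval_X_left_eq_algebraMap] at h

variable {f : RatFunc ℂ}

theorem ratComp_one_div_X (f : RatFunc ℂ) :
    ratComp f (1 / RatFunc.X) =
      ι (f.num.reflect (max f.num.natDegree f.denom.natDegree)) /
        ι (f.denom.reflect (max f.num.natDegree f.denom.natDegree)) := by
  rw [ratComp, ← aeval_one_div_X_mul_X_pow (le_max_left _ _),
    ← aeval_one_div_X_mul_X_pow (le_max_right _ _),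
    mul_div_mul_right _ _ (pow_ne_zero _ RatFunc.X_ne_zero)]

theorem ratComp_one_div_X_ne_C (hf : ∀ c, f ≠ RatFunc.C c) (c : ℂ) :
    ratComp f (1 / RatFunc.X) ≠ RatFunc.C c := by
  intro hc
  rw [ratComp_one_div_X, div_eq_iff (RatFunc.algebraMap_ne_zero (reflect_eq_zero_iff.not.mpr
    (RatFunc.denom_ne_zero f))), ← RatFunc.algebraMap_C, ← map_mul,
    (RatFunc.algebraMap_injective ℂ).eq_iff, ← reflect_C_mul] at hc
  have hnum := congrArg (reflect (max f.num.natDegree f.denom.natDegree)) hc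
  rw [reflect_reflect, reflect_reflect] at hnum
  apply hf c
  rw [← RatFunc.num_div_denom f, hnum, map_mul, RatFunc.algebraMap_C,
    mul_div_cancel_right₀ _ (RatFunc.algebraMap_ne_zero (RatFunc.denom_ne_zero f))]

theorem denom_ratComp_one_div_X_eval_zero_eq_zero_iff (hf : f ≠ 0) :
    (ratComp f (1 / RatFunc.X)).denom.eval 0 = 0 ↔ f.denom.natDegree < f.num.natDegree := by
  rw [← ordAt_neg_iff_denom_eval_eq_zero, ordAt_ratComp_of_denom_eval_eq_zero hf
    transcendental_one_div_X denom_one_div_X_eval_zero, degAt_one_div_X_zero]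
  omega

theorem fe_ratComp_one_div_X_zero (hle : f.num.natDegree ≤ f.denom.natDegree) :
    fe (ratComp f (1 / RatFunc.X)) 0 = f.num.coeff f.denom.natDegree / f.denom.leadingCoeff := by
  have hN : max f.num.natDegree f.denom.natDegree = f.denom.natDegree := max_eq_right hle
  have hreflect (P : ℂ[X]) :
      (P.reflect f.denom.natDegree).eval 0 = P.coeff f.denom.natDegree := by
    rw [← coeff_zero_eq_eval_zero, coeff_reflect, revAt_zero]
  have hden : (f.denom.reflect f.denom.natDegree).eval 0 ≠ 0 := by
    rw [hreflect]
    exact leadingCoeff_ne_zero.mpr (RatFunc.denom_ne_zero f)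
  have hrep := ratComp_one_div_X f
  rw [hN] at hrep
  rw [fe_eq_of_eq_div hrep (reflect_eq_zero_iff.not.mpr (RatFunc.denom_ne_zero f)) hden,
    hreflect, hreflect]
  rfl

theorem evalSphere_infty (hf : f ≠ 0) :
    evalSphere f ∞ = sphereValue (ratComp f (1 / RatFunc.X)) 0 := by
  change (if f.denom.natDegree < f.num.natDegree then ∞ else _) = _
  have hpole := denom_ratComp_one_div_X_eval_zero_eq_zero_iff hf
  rw [sphereValue]
  by_cases hlt : f.denom.natDegree < f.num.natDegree
  · rw [if_pos hlt, if_pos (hpole.mpr hlt)]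
  · rw [if_neg hlt, if_neg (hpole.not.mpr hlt), fe_ratComp_one_div_X_zero (not_lt.mp hlt)]

end Infinity

section Invariance

theorem fe_C (c z : ℂ) : fe (RatFunc.C c) z = c := by
  simp [fe_eq_eval]

theorem eventually_deriv_eq_of_eventually_eq {F G : ℂ → ℂ}
    (hFG : ∀ᶠ z in cofinite, F z = G z) : ∀ᶠ z in cofinite, deriv F z = deriv G z := by
  rw [eventually_cofinite] at hFG ⊢
  refine hFG.subset fun z hz => ?_
  by_contra hmem
  exact hz (EventuallyEq.deriv_eq (eventually_of_mem
    (hFG.isClosed.isOpen_compl.mem_nhds hmem) fun w hw => not_not.mp hw))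

variable {f q : RatFunc ℂ} {lam : ℂ}

theorem pullbackQD_eq_C_mul (hf : Transcendental ℂ f)
    (heig : ∀ᶠ z in cofinite, fe q (fe f z) * deriv (fe f) z ^ 2 = lam * fe q z) :
    pullbackQD q f = RatFunc.C lam * q := by
  apply eq_of_eventually_fe_eq
  filter_upwards [eventually_fe_pullbackQD q hf, heig, eventually_fe_mul (RatFunc.C lam) q]
    with z hpull hz hmul
  rw [hpull, hz, hmul, fe_C]

theorem pullbackQD_ratComp_one_div_X (hf : ∀ c, f ≠ RatFunc.C c)
    (heig : ∀ᶠ z in cofinite, fe q (fe f z) * deriv (fe f) z ^ 2 = lam * fe q z) :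
    pullbackQD q (ratComp f (1 / RatFunc.X)) =
      RatFunc.C lam * pullbackQD q (1 / RatFunc.X) := by
  have hg := transcendental_of_forall_ne_C (ratComp_one_div_X_ne_C hf)
  have hfe_g : ∀ᶠ z in cofinite, fe (ratComp f (1 / RatFunc.X)) z = fe f z⁻¹ := by
    filter_upwards [eventually_fe_ratComp f transcendental_one_div_X] with z hz
    simp only [hz, fe_one_div_X]
  have hderiv_g : ∀ᶠ z in cofinite,
      deriv (fe (ratComp f (1 / RatFunc.X))) z = deriv (fe f) z⁻¹ * -(z ^ 2)⁻¹ := by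
    filter_upwards [eventually_deriv_eq_of_eventually_eq hfe_g, eventually_cofinite_ne 0,
      inv_injective.tendsto_cofinite.eventually (eventually_denom_eval_ne_zero f)]
      with z hz hz0 hpole
    have hdiff : DifferentiableAt ℂ (fe f) z⁻¹ :=
      f.num.differentiableAt.div f.denom.differentiableAt hpole
    rw [hz, show (fun t => fe f t⁻¹) = fe f ∘ Inv.inv from rfl,
      deriv_comp z hdiff (differentiableAt_inv hz0), deriv_inv]
  apply eq_of_eventually_fe_eq
  filter_upwards [eventually_fe_pullbackQD q hg, hfe_g, hderiv_g,
    inv_injective.tendsto_cofinite.eventually heig,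
    eventually_fe_mul (RatFunc.C lam) (pullbackQD q (1 / RatFunc.X)),
    eventually_fe_pullbackQD q transcendental_one_div_X]
    with z hpull hz hderiv hz_eig hmul hpull_s
  rw [hpull, hz, hderiv, hmul, fe_C, hpull_s]
  simp only [fe_one_div_X, deriv_inv]
  linear_combination ((z ^ 2)⁻¹) ^ 2 * hz_eig

theorem qdOrd_eq_degAtSphere_mul_add_two_sub_two (hq : q ≠ 0) (hlam : lam ≠ 0)
    (hf : ∀ c, f ≠ RatFunc.C c)
    (heig : ∀ᶠ z in cofinite, fe q (fe f z) * deriv (fe f) z ^ 2 = lam * fe q z)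
    (x : OnePoint ℂ) :
    qdOrd q x = degAtSphere f x * (qdOrd q (evalSphere f x) + 2) - 2 := by
  have hlamC : RatFunc.C lam ≠ 0 := by simpa using hlam
  induction x using OnePoint.rec with
  | infty =>
    have hg := transcendental_of_forall_ne_C (ratComp_one_div_X_ne_C hf)
    rw [evalSphere_infty (by simpa using hf 0), degAtSphere_infty, ← ordAt_pullbackQD hq hg,
      pullbackQD_ratComp_one_div_X hf heig,
      ordAt_mul hlamC (pullbackQD_ne_zero hq transcendental_one_div_X), ordAt_C, zero_add,
      ordAt_pullbackQD_one_div_X hq, qdOrd_infty]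
  | coe w =>
    have hf' := transcendental_of_forall_ne_C hf
    rw [evalSphere_coe, degAtSphere_coe, ← ordAt_pullbackQD hq hf', pullbackQD_eq_C_mul hf' heig,
      ordAt_mul hlamC hq, ordAt_C, zero_add, qdOrd_coe]

end Invariance

section PoleCount

theorem encard_setOf_onePoint {α : Type*} (P : OnePoint α → Prop) :
    {x | P x}.encard = (if P ∞ then 1 else 0) + {a : α | P a}.encard := by
  by_cases hinf : P ∞
  · have hset : {x | P x} = insert ∞ ((↑) '' {a : α | P a}) := by
      ext x
      induction x using OnePoint.rec <;> simp [hinf]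
    rw [hset, Set.encard_insert_of_notMem (by simp), OnePoint.coe_injective.encard_image,
      if_pos hinf, add_comm]
  · have hset : {x | P x} = (↑) '' {a : α | P a} := by
      ext x
      induction x using OnePoint.rec <;> simp [hinf]
    rw [hset, OnePoint.coe_injective.encard_image, if_neg hinf, zero_add]

variable {q : RatFunc ℂ}

theorem natDegree_num_eq_zero_of_ordAt_nonpos (h : ∀ a, ordAt q a ≤ 0) :
    q.num.natDegree = 0 := by
  by_contra hdeg
  obtain ⟨a, ha⟩ :=
    Complex.exists_root (natDegree_pos_iff_degree_pos.mp (Nat.pos_of_ne_zero hdeg))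
  have hnum : q.num ≠ 0 := fun h0 => hdeg (by rw [h0, natDegree_zero])
  have hpos := (rootMultiplicity_pos hnum).mpr ha
  have hord := h a
  rw [ordAt, rootMultiplicity_eq_zero fun hden => num_eval_ne_zero_of_denom_eval_eq_zero hden ha]
    at hord
  omega

theorem encard_setOf_ordAt_eq_neg_one (hords : ∀ a, ordAt q a = -1 ∨ ordAt q a = 0) :
    {a | ordAt q a = -1}.encard = q.denom.natDegree := by
  have hnum : ∀ a, q.num.rootMultiplicity a = 0 := by
    intro a
    rw [eq_C_of_natDegree_eq_zero (natDegree_num_eq_zero_of_ordAt_nonpos fun a => by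
      rcases hords a with h | h <;> omega)]
    exact rootMultiplicity_C _ _
  have hord (a : ℂ) : ordAt q a = -(q.denom.rootMultiplicity a : ℤ) := by simp [ordAt, hnum]
  have hle (a : ℂ) : q.denom.rootMultiplicity a ≤ 1 := by
    have := hords a
    rw [hord] at this
    omega
  have hset : {a | ordAt q a = -1} = q.denom.roots.toFinset := by
    ext a
    rw [Set.mem_ofPred_eq, hord, Finset.mem_coe, Multiset.mem_toFinset,
      mem_roots (RatFunc.denom_ne_zero q), ← rootMultiplicity_pos (RatFunc.denom_ne_zero q)]
    have := hle a
    omega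
  classical
  rw [hset, Set.encard_coe_eq_coe_finsetCard, Multiset.toFinset_card_of_nodup
    (Multiset.nodup_iff_count_le_one.mpr fun a => (count_roots q.denom).trans_le (hle a)),
    IsAlgClosed.card_roots_eq_natDegree]

theorem encard_setOf_qdOrd_eq_neg_one (hords : ∀ x, qdOrd q x = -1 ∨ qdOrd q x = 0) :
    {x | qdOrd q x = -1}.encard = 4 := by
  have hfin (a : ℂ) : ordAt q a = -1 ∨ ordAt q a = 0 := hords a
  have hinf : ordInfQD q = q.denom.natDegree - 4 := by
    rw [ordInfQD, natDegree_num_eq_zero_of_ordAt_nonpos fun a => by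
      rcases hfin a with h | h <;> omega]
    ring
  rw [encard_setOf_onePoint, qdOrd_infty]
  simp only [qdOrd_coe]
  rw [encard_setOf_ordAt_eq_neg_one hfin]
  rcases hords ∞ with h | h <;> rw [qdOrd_infty, hinf] at h
  · rw [if_pos (by omega), show q.denom.natDegree = 3 by omega]
    rfl
  · rw [if_neg (by omega), show q.denom.natDegree = 4 by omega]
    rfl

end PoleCount

theorem ne_C_of_natDegree_pos {f : RatFunc ℂ} (hf : 0 < max f.num.natDegree f.denom.natDegree)
    (c : ℂ) : f ≠ RatFunc.C c := by
  rintro rfl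
  simp [RatFunc.num_C, RatFunc.denom_C] at hf

theorem local_conditions_of_eq_mul_add_two_sub_two {a b : ℤ} {d : ℕ} (h : a = d * (b + 2) - 2)
    (ha : a = -1 ∨ a = 0) (hb : b = -1 ∨ b = 0) :
    (a = -1 → b = -1) ∧ (b = -1 → a = -1 ∨ d = 2) ∧ (2 ≤ d → b = -1) ∧
      (2 ≤ d → a ≠ -1) := by
  rcases hb with rfl | rfl <;> omega

/-- Let `f` be a rational map of degree `D > 1` and `q ≠ 0` a meromorphic
quadratic differential with `f^*q = λq`, `λ ≠ 0`, with no zeros and at worst simple poles.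
Then `q` has exactly four poles; the pole set is forward invariant; every preimage of a pole
is a pole or a simple critical point; every critical value is a pole; and no critical point
is a pole. -/
theorem lattes_characterization (f q : RatFunc ℂ) (lam : ℂ) (D : ℕ)
    (hD : D = max f.num.natDegree f.denom.natDegree) (hD1 : 1 < D)
    (hq0 : q ≠ 0) (hlam : lam ≠ 0)
    (heig : ∀ᶠ z in (Filter.cofinite : Filter ℂ),
      fe q (fe f z) * (deriv (fe f) z) ^ 2 = lam * fe q z)
    (hords : ∀ x : OnePoint ℂ, qdOrd q x = -1 ∨ qdOrd q x = 0) :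
    ({x : OnePoint ℂ | qdOrd q x = -1}.encard = 4) ∧
    (∀ x : OnePoint ℂ, qdOrd q x = -1 → qdOrd q (evalSphere f x) = -1) ∧
    (∀ w : OnePoint ℂ, qdOrd q (evalSphere f w) = -1 →
      qdOrd q w = -1 ∨ degAtSphere f w = 2) ∧
    (∀ w : OnePoint ℂ, 2 ≤ degAtSphere f w → qdOrd q (evalSphere f w) = -1) ∧
    (∀ w : OnePoint ℂ, 2 ≤ degAtSphere f w → qdOrd q w ≠ -1) := by
  have hf := ne_C_of_natDegree_pos (f := f) (by omega)
  have hlocal (x : OnePoint ℂ) := local_conditions_of_eq_mul_add_two_sub_two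
    (qdOrd_eq_degAtSphere_mul_add_two_sub_two hq0 hlam hf heig x) (hords x)
    (hords (evalSphere f x))
  exact ⟨encard_setOf_qdOrd_eq_neg_one hords, fun x => (hlocal x).1, fun x => (hlocal x).2.1,
    fun x => (hlocal x).2.2.1, fun x => (hlocal x).2.2.2⟩
end
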